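/- arXiv:2312.11379 — 7 statements merged into one kernel-verified Lean document; each statement's English description precedes it below -/
import Mathlib

section
/- Let k ≥ 2 be an integer and define γ(k) = log 2 + Σ_{i=0}^∞ log(1 + 1/t'_k(i)^k)/k^(i+1), where t'_k(0) = 2 and t'_k(i+1) = t'_k(i)^k + 1. Then log 2 < γ(k) < log 2 + 1/(2^k (k−1)). In particular, γ(k) tends to log 2 from above as k → ∞. -/
/-!
Every term of the series is positive, and since `log (1 + x) < x` for `x > 0` and `t'_k(i) ≥ 2`,
the `i`-th term is strictly below `2^{-k} / k^{i+1}`; these bounds sum to `2^{-k} / (k - 1)`,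
which tends to `0` as `k → ∞`.
-/

open Real Filter Topology

lemma hasSum_div_pow_succ (c : ℝ) {r : ℝ} (hr : 1 < r) :
    HasSum (fun i : ℕ => c / r ^ (i + 1)) (c / (r - 1)) := by
  have hr0 : 0 < r := one_pos.trans hr
  have hgeom := (hasSum_geometric_of_lt_one (inv_pos.2 hr0).le (inv_lt_one_of_one_lt₀ hr)).mul_left
    (c / r)
  have hterm : (fun i : ℕ => c / r ^ (i + 1)) = fun i => c / r * r⁻¹ ^ i := by
    funext i
    rw [pow_succ', inv_pow]
    field_simp
  have hval : c / (r - 1) = c / r * (1 - r⁻¹)⁻¹ := by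
    field_simp [(sub_pos.2 hr).ne']
  rwa [hterm, hval]

lemma tsum_log_one_add_div_pow_succ_mem_Ioo {x : ℕ → ℝ} {c r : ℝ} (hx : ∀ i, 0 < x i)
    (hxc : ∀ i, x i ≤ c) (hr : 1 < r) :
    ∑' i, log (1 + x i) / r ^ (i + 1) ∈ Set.Ioo 0 (c / (r - 1)) := by
  have hrpow : ∀ i : ℕ, 0 < r ^ (i + 1) := fun i => pow_pos (one_pos.trans hr) _
  have hpos : ∀ i, 0 < log (1 + x i) / r ^ (i + 1) := fun i =>
    div_pos (log_pos (by linarith [hx i])) (hrpow i)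
  have hlt : ∀ i, log (1 + x i) / r ^ (i + 1) < c / r ^ (i + 1) := by
    intro i
    have hlog : log (1 + x i) < x i := by
      linarith [log_lt_sub_one_of_pos (x := 1 + x i) (by linarith [hx i]) (by linarith [hx i])]
    exact div_lt_div_of_pos_right (hlog.trans_le (hxc i)) (hrpow i)
  have hgeom := hasSum_div_pow_succ c hr
  have hsum : Summable fun i => log (1 + x i) / r ^ (i + 1) :=
    .of_nonneg_of_le (fun i => (hpos i).le) (fun i => (hlt i).le) hgeom.summable
  exact ⟨hsum.tsum_pos (fun i => (hpos i).le) 0 (hpos 0),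
    (hsum.tsum_lt_tsum (fun i => (hlt i).le) (hlt 0) hgeom.summable).trans_eq hgeom.tsum_eq⟩

lemma two_le_of_eq_pow_add_one {t : ℕ → ℕ} {k : ℕ} (h0 : 2 ≤ t 0)
    (hrec : ∀ i, t (i + 1) = t i ^ k + 1) (i : ℕ) : 2 ≤ t i := by
  induction i with
  | zero => exact h0
  | succ i ih =>
    rw [hrec]
    have : 1 ≤ t i ^ k := Nat.one_le_pow _ _ (by omega)
    omega

lemma tendsto_one_div_two_pow_mul_sub_one :
    Tendsto (fun k : ℕ => 1 / (2 ^ k * ((k : ℝ) - 1))) atTop (𝓝 0) := by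
  have hsub : Tendsto (fun k : ℕ => (k : ℝ) - 1) atTop atTop :=
    tendsto_atTop_add_const_right _ (-1) tendsto_natCast_atTop_atTop
  have hmul := (tendsto_pow_atTop_atTop_of_one_lt (one_lt_two (α := ℝ))).atTop_mul_atTop₀ hsub
  exact hmul.inv_tendsto_atTop.congr fun k => (one_div _).symm

theorem stmt4 (t' : ℕ → ℕ → ℕ)
    (h0 : ∀ k, 2 ≤ k → t' k 0 = 2)
    (hrec : ∀ k, 2 ≤ k → ∀ i, t' k (i + 1) = t' k i ^ k + 1)
    (γ : ℕ → ℝ)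
    (hγ : ∀ k, 2 ≤ k → γ k = Real.log 2 +
      ∑' i : ℕ, Real.log (1 + 1 / (t' k i : ℝ) ^ k) / (k : ℝ) ^ (i + 1)) :
    (∀ k, 2 ≤ k → Real.log 2 < γ k ∧
      γ k < Real.log 2 + 1 / (2 ^ k * ((k : ℝ) - 1))) ∧
    Filter.Tendsto γ Filter.atTop (nhds (Real.log 2)) := by
  have bounds : ∀ k, 2 ≤ k → Real.log 2 < γ k ∧
      γ k < Real.log 2 + 1 / (2 ^ k * ((k : ℝ) - 1)) := by
    intro k hk
    have ht : ∀ i, (2 : ℝ) ≤ t' k i := fun i => by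
      exact_mod_cast two_le_of_eq_pow_add_one (h0 k hk).ge (hrec k hk) i
    obtain ⟨hpos, hlt⟩ := tsum_log_one_add_div_pow_succ_mem_Ioo
      (x := fun i => 1 / (t' k i : ℝ) ^ k) (c := 1 / 2 ^ k) (r := k)
      (fun i => by have := ht i; positivity)
      (fun i => one_div_le_one_div_of_le (by positivity) (pow_le_pow_left₀ zero_le_two (ht i) k))
      (by exact_mod_cast hk)
    rw [div_div] at hlt
    rw [hγ k hk]
    exact ⟨by linarith, by linarith⟩
  refine ⟨bounds, tendsto_of_tendsto_of_tendsto_of_le_of_le' tendsto_const_nhds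
    (by simpa only [add_zero] using tendsto_one_div_two_pow_mul_sub_one.const_add (Real.log 2)) ?_ ?_⟩
  · filter_upwards [eventually_ge_atTop 2] with k hk using (bounds k hk).1.le
  · filter_upwards [eventually_ge_atTop 2] with k hk using (bounds k hk).2.le
end

section
/- The function γ : {2,3,4,...} → ℝ given by γ(k) = log 2 + Σ_{i=0}^∞ log(1 + 1/t'_k(i)^k)/k^(i+1), where t'_k(0) = 2 and t'_k(i+1) = t'_k(i)^k + 1, is strictly decreasing in k: for integers 2 ≤ k < k', γ(k') < γ(k). -/
private lemma aux_summable (K : ℕ) (hK : 2 ≤ K) (t : ℕ → ℕ) (ht : ∀ i, 2 ≤ t i) :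
    Summable (fun i : ℕ => Real.log (1 + 1 / (t i : ℝ) ^ K) / (K : ℝ) ^ (i + 1)) := by
  have hKR : (2:ℝ) ≤ K := by exact_mod_cast hK
  apply Summable.of_nonneg_of_le (f := fun i : ℕ => Real.log 2 * (1/2:ℝ) ^ i)
  · intro i
    have htpos : (0:ℝ) < (t i : ℝ) ^ K := pow_pos (by exact_mod_cast (by have := ht i; omega : 0 < t i)) K
    apply div_nonneg
    · apply Real.log_nonneg
      have : (0:ℝ) ≤ 1 / (t i : ℝ) ^ K := by positivity
      linarith
    · positivity
  · intro i
    have htpos : (0:ℝ) < (t i : ℝ) ^ K := pow_pos (by exact_mod_cast (by have := ht i; omega : 0 < t i)) K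
    have ht1 : (1:ℝ) ≤ (t i : ℝ) ^ K := by
      apply one_le_pow₀
      exact_mod_cast (ht i).trans' (by norm_num)
    have hle : (1:ℝ) + 1 / (t i : ℝ) ^ K ≤ 2 := by
      have : 1 / (t i : ℝ) ^ K ≤ 1 := by
        rw [div_le_one htpos]; exact ht1
      linarith
    have hlog : Real.log (1 + 1 / (t i : ℝ) ^ K) ≤ Real.log 2 :=
      Real.log_le_log (by positivity) hle
    have hpow : (2:ℝ) ^ i ≤ (K:ℝ) ^ (i+1) :=
      calc (2:ℝ) ^ i ≤ (2:ℝ) ^ (i+1) := by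
            apply pow_le_pow_right₀ (by norm_num) (by omega)
        _ ≤ (K:ℝ) ^ (i+1) := by
            apply pow_le_pow_left₀ (by norm_num) hKR
    calc Real.log (1 + 1 / (t i : ℝ) ^ K) / (K:ℝ) ^ (i+1)
        ≤ Real.log 2 / (2:ℝ) ^ i := by
          apply div_le_div₀ (Real.log_nonneg (by norm_num)) hlog (by positivity) hpow
      _ = Real.log 2 * (1/2:ℝ) ^ i := by
          rw [one_div, inv_pow, div_eq_mul_inv]
  · exact (summable_geometric_of_lt_one (by norm_num) (by norm_num)).mul_left _

theorem stmt6 (t' : ℕ → ℕ → ℕ)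
    (h0 : ∀ k, 2 ≤ k → t' k 0 = 2)
    (hrec : ∀ k, 2 ≤ k → ∀ i, t' k (i + 1) = t' k i ^ k + 1)
    (γ : ℕ → ℝ)
    (hγ : ∀ k, 2 ≤ k → γ k = Real.log 2 +
      ∑' i : ℕ, Real.log (1 + 1 / (t' k i : ℝ) ^ k) / (k : ℝ) ^ (i + 1)) :
    ∀ k k' : ℕ, 2 ≤ k → k < k' → γ k' < γ k := by
  intro k k' hk hkk
  have hk' : 2 ≤ k' := by omega
  -- t' ≥ 2
  have ht2 : ∀ K, 2 ≤ K → ∀ i, 2 ≤ t' K i := by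
    intro K hK i
    induction i with
    | zero => rw [h0 K hK]
    | succ n ih =>
        rw [hrec K hK n]
        have : 2 ≤ t' K n ^ K := le_trans ih (Nat.le_self_pow (by omega) _)
        omega
  -- monotone in k
  have hmono : ∀ i, t' k i ≤ t' k' i := by
    intro i
    induction i with
    | zero => rw [h0 k hk, h0 k' hk']
    | succ n ih =>
        rw [hrec k hk n, hrec k' hk' n]
        have h1 : t' k n ^ k ≤ t' k n ^ k' :=
          Nat.pow_le_pow_right (by have := ht2 k hk n; omega) (le_of_lt hkk)
        have h2 : t' k n ^ k' ≤ t' k' n ^ k' := Nat.pow_le_pow_left ih k'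
        omega
  have hmonoP : ∀ i, (t' k i : ℝ) ^ k ≤ (t' k' i : ℝ) ^ k' := by
    intro i
    have h1 : t' k i ^ k ≤ t' k' i ^ k' :=
      le_trans (Nat.pow_le_pow_right (by have := ht2 k hk i; omega) (le_of_lt hkk))
        (Nat.pow_le_pow_left (hmono i) k')
    exact_mod_cast h1
  have hpos : ∀ (K : ℕ), 2 ≤ K → ∀ i, (0:ℝ) < (t' K i : ℝ) ^ K := by
    intro K hK i
    have := ht2 K hK i
    positivity
  -- termwise ≤
  have hterm : ∀ i : ℕ,
      Real.log (1 + 1 / (t' k' i : ℝ) ^ k') / (k' : ℝ) ^ (i + 1) ≤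
      Real.log (1 + 1 / (t' k i : ℝ) ^ k) / (k : ℝ) ^ (i + 1) := by
    intro i
    have p := hpos k hk i
    have p' := hpos k' hk' i
    have hlog : Real.log (1 + 1 / (t' k' i : ℝ) ^ k') ≤
        Real.log (1 + 1 / (t' k i : ℝ) ^ k) := by
      apply Real.log_le_log (by positivity)
      have : 1 / (t' k' i : ℝ) ^ k' ≤ 1 / (t' k i : ℝ) ^ k :=
        one_div_le_one_div_of_le p (hmonoP i)
      linarith
    apply div_le_div₀ _ hlog (by positivity)
    · apply pow_le_pow_left₀ (by positivity)
      exact_mod_cast le_of_lt hkk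
    · apply Real.log_nonneg
      have : (0:ℝ) ≤ 1 / (t' k i : ℝ) ^ k := by positivity
      linarith
  -- strict at 0
  have hstrict : Real.log (1 + 1 / (t' k' 0 : ℝ) ^ k') / (k' : ℝ) ^ (0 + 1) <
      Real.log (1 + 1 / (t' k 0 : ℝ) ^ k) / (k : ℝ) ^ (0 + 1) := by
    rw [h0 k hk, h0 k' hk']
    have h2 : (2:ℝ) ^ k < (2:ℝ) ^ k' := by
      apply pow_lt_pow_right₀ (by norm_num) hkk
    have hnum : Real.log (1 + 1 / (2:ℝ) ^ k') < Real.log (1 + 1 / (2:ℝ) ^ k) := by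
      apply Real.log_lt_log (by positivity)
      have : 1 / (2:ℝ) ^ k' < 1 / (2:ℝ) ^ k := by
        apply one_div_lt_one_div_of_lt (by positivity) h2
      linarith
    apply div_lt_div₀ hnum
    · simpa using (show (k:ℝ) ≤ k' by exact_mod_cast hkk.le)
    · apply Real.log_nonneg
      have : (0:ℝ) ≤ 1 / (2:ℝ) ^ k := by positivity
      linarith
    · simpa using (show (0:ℝ) < k by positivity)
  have hs : Summable (fun i : ℕ => Real.log (1 + 1 / (t' k i : ℝ) ^ k) / (k : ℝ) ^ (i + 1)) :=
    aux_summable k hk (t' k) (ht2 k hk)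
  have hs' : Summable (fun i : ℕ => Real.log (1 + 1 / (t' k' i : ℝ) ^ k') / (k' : ℝ) ^ (i + 1)) :=
    aux_summable k' hk' (t' k') (ht2 k' hk')
  rw [hγ k hk, hγ k' hk']
  apply add_lt_add_right
  exact Summable.tsum_lt_tsum hterm hstrict hs' hs
end

section
/- Let k ≥ 2 be an integer, t'_k(0) = 2, t'_k(h+1) = t'_k(h)^k + 1, and γ(k) = log 2 + Σ_{i=0}^∞ log(1 + 1/t'_k(i)^k)/k^(i+1). Then for every h ≥ 0, t'_k(h) = ⌊ e^(γ(k)·k^h) ⌋; equivalently, the number of ordered rooted subtrees of the perfect k-ary tree of height h equals ⌊ c(k)^(k^h) ⌋ − 1 with c(k) = e^(γ(k)). -/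
/-!
Write `u h = log t'(h)` and `d h = log (1 + 1 / t'(h)^k)`, so that `u (h+1) = k u h + d h`.
With the tail `ε h = ∑_{j ≥ 0} d (j+h) / k^(j+1)`, which satisfies `k ε h = d h + ε (h+1)`,
the sum `u h + ε h` is multiplied by `k` at each step and equals `γ` at `h = 0`. Hence
`γ k^h = u h + ε h`, i.e.
`exp(γ)^(k^h) = t'(h) · exp(ε h)`. Since `d` is decreasing, `0 ≤ ε h ≤ d h`, hence
`t'(h) ≤ exp(γ)^(k^h) ≤ t'(h) + t'(h)^(1-k) < t'(h) + 1`.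
-/

open Real

/-- Equals `k^h ∑_{i ≥ h} d i / k^(i+1)`. -/
noncomputable def weightedTail (k : ℝ) (d : ℕ → ℝ) (h : ℕ) : ℝ :=
  ∑' j, d (j + h) / k ^ (j + 1)

section WeightedTail

variable {k : ℝ} {d : ℕ → ℝ}

lemma div_pow_succ_le_of_antitone (hd0 : ∀ n, 0 ≤ d n) (hd : Antitone d) (hk : 2 ≤ k)
    (j : ℕ) : d j / k ^ (j + 1) ≤ d 0 / 2 / 2 ^ j := by
  rw [div_div, ← pow_succ']
  exact div_le_div₀ (hd0 0) (hd (Nat.zero_le j)) (by positivity)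
    (pow_le_pow_left₀ zero_le_two hk _)

lemma summable_div_pow_succ_of_antitone (hd0 : ∀ n, 0 ≤ d n) (hd : Antitone d) (hk : 2 ≤ k) :
    Summable fun j => d j / k ^ (j + 1) :=
  (summable_geometric_two' (d 0)).of_nonneg_of_le (fun j => div_nonneg (hd0 j) (by positivity))
    (div_pow_succ_le_of_antitone hd0 hd hk)

lemma tsum_div_pow_succ_le_of_antitone (hd0 : ∀ n, 0 ≤ d n) (hd : Antitone d) (hk : 2 ≤ k) :
    ∑' j, d j / k ^ (j + 1) ≤ d 0 :=
  (tsum_geometric_two' (d 0)).symm ▸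
    (summable_div_pow_succ_of_antitone hd0 hd hk).tsum_le_tsum
      (div_pow_succ_le_of_antitone hd0 hd hk) (summable_geometric_two' (d 0))

lemma weightedTail_nonneg (hd0 : ∀ n, 0 ≤ d n) (hk : 0 ≤ k) (h : ℕ) :
    0 ≤ weightedTail k d h :=
  tsum_nonneg fun j => div_nonneg (hd0 _) (by positivity)

lemma weightedTail_le (hd0 : ∀ n, 0 ≤ d n) (hd : Antitone d) (hk : 2 ≤ k) (h : ℕ) :
    weightedTail k d h ≤ d h := by
  simpa [weightedTail] using tsum_div_pow_succ_le_of_antitone (d := fun j => d (j + h))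
    (fun _ => hd0 _) (hd.comp_monotone add_left_mono) hk

lemma mul_weightedTail {h : ℕ} (hk : k ≠ 0) (hs : Summable fun j => d (j + h) / k ^ (j + 1)) :
    k * weightedTail k d h = d h + weightedTail k d (h + 1) := by
  rw [weightedTail, weightedTail, hs.tsum_eq_zero_add, mul_add, ← tsum_mul_left]
  congr 1
  · rw [zero_add, zero_add, pow_one, mul_div_cancel₀ _ hk]
  · congr 1 with j
    rw [show j + 1 + h = j + (h + 1) by ring, pow_succ]
    field_simp

lemma add_weightedTail_eq_pow_mul {u : ℕ → ℝ} (hu : ∀ n, u (n + 1) = k * u n + d n)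
    (hd0 : ∀ n, 0 ≤ d n) (hd : Antitone d) (hk : 2 ≤ k) (h : ℕ) :
    u h + weightedTail k d h = k ^ h * (u 0 + weightedTail k d 0) := by
  induction h with
  | zero => simp
  | succ n ih =>
    have hs : Summable fun j => d (j + n) / k ^ (j + 1) :=
      summable_div_pow_succ_of_antitone (fun _ => hd0 _) (hd.comp_monotone add_left_mono) hk
    rw [hu, add_assoc, ← mul_weightedTail (by positivity) hs, ← mul_add, ih, pow_succ]
    ring

end WeightedTail

section PowAddOne

variable {k : ℕ} {t : ℕ → ℕ}

lemma two_le_of_pow_add_one (hk : k ≠ 0) (h0 : t 0 = 2) (hrec : ∀ n, t (n + 1) = t n ^ k + 1)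
    (n : ℕ) : 2 ≤ t n := by
  induction n with
  | zero => omega
  | succ n ih => have := Nat.le_self_pow hk (t n); rw [hrec]; omega

lemma monotone_of_pow_add_one (hk : k ≠ 0) (hrec : ∀ n, t (n + 1) = t n ^ k + 1) : Monotone t :=
  monotone_nat_of_le_succ fun n => hrec n ▸ (Nat.le_self_pow hk _).trans (Nat.le_succ _)

end PowAddOne

lemma log_pow_add_one {x : ℝ} (hx : 0 < x) (k : ℕ) :
    log (x ^ k + 1) = k * log x + log (1 + 1 / x ^ k) := by
  rw [← log_pow, ← log_mul (by positivity) (by positivity), mul_one_add,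
    mul_one_div_cancel (by positivity)]

lemma floor_mul_exp_eq_of_le_log {n k : ℕ} (hn : 2 ≤ n) (hk : 2 ≤ k) {ε : ℝ}
    (hε0 : 0 ≤ ε) (hε : ε ≤ log (1 + 1 / (n : ℝ) ^ k)) : ⌊n * exp ε⌋₊ = n := by
  have hn1 : (1 : ℝ) < n := by exact_mod_cast hn
  rw [Nat.floor_eq_iff (by positivity)]
  constructor
  · exact le_mul_of_one_le_right (by positivity) (one_le_exp hε0)
  · calc (n : ℝ) * exp ε ≤ n * (1 + 1 / (n : ℝ) ^ k) := by
          refine mul_le_mul_of_nonneg_left ?_ (by positivity)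
          rwa [← exp_log (by positivity : (0 : ℝ) < 1 + 1 / (n : ℝ) ^ k), exp_le_exp]
      _ = n + n / (n : ℝ) ^ k := by ring
      _ < n + 1 := by
          rw [add_lt_add_iff_left, div_lt_one (by positivity)]
          exact lt_self_pow₀ hn1 (by omega)

theorem stmt7 (k : ℕ) (hk : 2 ≤ k) (t' : ℕ → ℕ)
    (h0 : t' 0 = 2) (hrec : ∀ h, t' (h + 1) = t' h ^ k + 1)
    (γ : ℝ)
    (hγ : γ = Real.log 2 +
      ∑' i : ℕ, Real.log (1 + 1 / (t' i : ℝ) ^ k) / (k : ℝ) ^ (i + 1)) :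
    ∀ h : ℕ, t' h = ⌊Real.exp γ ^ (k ^ h)⌋₊ := by
  intro h
  have hk0 : k ≠ 0 := by omega
  have ht_pos (i : ℕ) : (0 : ℝ) < t' i := by
    have := two_le_of_pow_add_one hk0 h0 hrec i; positivity
  set d : ℕ → ℝ := fun i => log (1 + 1 / (t' i : ℝ) ^ k)
  have hd0 (i : ℕ) : 0 ≤ d i := log_nonneg (le_add_of_nonneg_right (by positivity))
  have hd : Antitone d := fun i j hij =>
    log_le_log (by positivity) (add_le_add_right (one_div_le_one_div_of_le (pow_pos (ht_pos i) k)
      (pow_le_pow_left₀ (ht_pos i).le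
        (Nat.cast_le.2 (monotone_of_pow_add_one hk0 hrec hij)) k)) 1)
  have hu (n : ℕ) : log (t' (n + 1)) = k * log (t' n) + d n := by
    rw [hrec]; push_cast; exact log_pow_add_one (ht_pos n) k
  have hkR : (2 : ℝ) ≤ k := by exact_mod_cast hk
  have hγ' : γ = log (t' 0) + weightedTail k d 0 := by simp [hγ, h0, weightedTail, d]
  have hgrowth : log (t' h) + weightedTail k d h = k ^ h * γ :=
    hγ' ▸ add_weightedTail_eq_pow_mul (u := fun n => log (t' n)) hu hd0 hd hkR h
  have hpow : exp γ ^ (k ^ h) = t' h * exp (weightedTail k d h) := by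
    rw [← exp_nat_mul, Nat.cast_pow, ← hgrowth, exp_add, exp_log (ht_pos h)]
  rw [hpow, floor_mul_exp_eq_of_le_log (two_le_of_pow_add_one hk0 h0 hrec h) hk
    (weightedTail_nonneg hd0 (by positivity) h) (weightedTail_le hd0 hd hkR h)]
end

section
/- Let f, g : (0,∞) → (0,∞) be increasing bijections such that (a) f(x) ≤ g(x) for all x > 0, (b) f is convex, and (c) f(x)/g(x) → 1 as x → ∞. Then f⁻¹(x)/g⁻¹(x) → 1 as x → ∞. -/
/-!
Put `u = g⁻¹(y)`. Since `f ≤ g`, `f(u) ≤ y`, so `f⁻¹(y) ≥ u`. Conversely, convexity makes the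
slope of `f` on `[u, (1 + ε) u]` at least its slope on `[1, u]`, whence
`f((1 + ε) u) ≥ (1 + ε) f(u) - ε f(1)`. As `y → ∞`, `f(u) / y = f(u) / g(u) → 1` and `f(1) / y → 0`,
so the right-hand side eventually exceeds `y`, i.e. `f⁻¹(y) < (1 + ε) u`.
-/

open Filter Set Topology

theorem ConvexOn.one_add_mul_sub_le {s : Set ℝ} {f : ℝ → ℝ} (hf : ConvexOn ℝ s f)
    {a u ε : ℝ} (ha : a ∈ s) (hz : (1 + ε) * u ∈ s) (ha0 : 0 ≤ a) (hau : a < u) (hε : 0 < ε)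
    (hfau : f a ≤ f u) : (1 + ε) * f u - ε * f a ≤ f ((1 + ε) * u) := by
  have hu : u < (1 + ε) * u := by nlinarith
  have hslope := hf.slope_mono_adjacent ha hz hau hu
  have hslope0 : 0 ≤ (f u - f a) / (u - a) := div_nonneg (sub_nonneg.2 hfau) (sub_pos.2 hau).le
  have hzu : (1 + ε) * u - u = ε * u := by ring
  rw [hzu, le_div_iff₀ (mul_pos hε (by linarith))] at hslope
  have hstep : ε * (f u - f a) ≤ (f u - f a) / (u - a) * (ε * u) := by
    calc ε * (f u - f a) = (f u - f a) / (u - a) * (ε * (u - a)) := by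
          field_simp [(sub_pos.2 hau).ne']
      _ ≤ (f u - f a) / (u - a) * (ε * u) := by gcongr; linarith
  linarith

theorem tendsto_atTop_of_rightInverse {g g' : ℝ → ℝ} (hg : MonotoneOn g (Ioi 0))
    (hg' : ∀ y ∈ Ioi (0 : ℝ), g' y ∈ Ioi (0 : ℝ) ∧ g (g' y) = y) : Tendsto g' atTop atTop := by
  refine tendsto_atTop_atTop.2 fun M => ⟨max (g (max M 1) + 1) 1, fun y hy => ?_⟩
  have hy0 : (0 : ℝ) < y := by linarith [le_max_right (g (max M 1) + 1) 1]
  obtain ⟨hu0, hgu⟩ := hg' y hy0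
  by_contra! hlt
  have hM : max M 1 ∈ Ioi (0 : ℝ) := mem_Ioi.2 (one_pos.trans_le (le_max_right _ _))
  have := hg hu0 hM (hlt.le.trans (le_max_left _ _))
  linarith [le_max_left (g (max M 1) + 1) 1]

theorem eventually_lt_apply_one_add_mul {f g g' : ℝ → ℝ} (hconv : ConvexOn ℝ (Ioi 0) f)
    (hf : MonotoneOn f (Ioi 0)) (hsim : Tendsto (fun x => f x / g x) atTop (𝓝 1))
    (hg' : Tendsto g' atTop atTop) (hgg' : ∀ᶠ y in atTop, g (g' y) = y) {ε : ℝ} (hε : 0 < ε) :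
    ∀ᶠ y in atTop, y < f ((1 + ε) * g' y) := by
  have hratio : Tendsto (fun y => f (g' y) / y) atTop (𝓝 1) :=
    (hsim.comp hg').congr' (hgg'.mono fun y hy => by simp only [Function.comp, hy])
  have hconst : Tendsto (fun y => f 1 / y) atTop (𝓝 0) := tendsto_const_nhds.div_atTop tendsto_id
  have hlim : Tendsto (fun y => (1 + ε) * (f (g' y) / y) - ε * (f 1 / y)) atTop
      (𝓝 ((1 + ε) * 1 - ε * 0)) := (hratio.const_mul _).sub (hconst.const_mul _)
  rw [mul_one, mul_zero, sub_zero] at hlim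
  filter_upwards [hlim.eventually (eventually_gt_nhds (lt_add_of_pos_right 1 hε)), eventually_gt_atTop 0,
    hg'.eventually_gt_atTop 1] with y hy hy0 hu1
  have hu0 : (0 : ℝ) < g' y := one_pos.trans hu1
  have hfu : f 1 ≤ f (g' y) := hf (mem_Ioi.2 one_pos) hu0 hu1.le
  have hbound := hconv.one_add_mul_sub_le (mem_Ioi.2 one_pos) (mem_Ioi.2 (by positivity))
    zero_le_one hu1 hε hfu
  rw [mul_div_assoc', mul_div_assoc', ← sub_div, lt_div_iff₀ hy0, one_mul] at hy
  linarith

theorem stmt9_general (f g f' g' : ℝ → ℝ)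
    (hf_mono : StrictMonoOn f (Set.Ioi 0))
    (hg_mono : StrictMonoOn g (Set.Ioi 0))
    (hconv : ConvexOn ℝ (Set.Ioi 0) f)
    (hle : ∀ x ∈ Set.Ioi (0 : ℝ), f x ≤ g x)
    (hsim : Filter.Tendsto (fun x => f x / g x) Filter.atTop (nhds 1))
    (hf' : ∀ x ∈ Set.Ioi (0 : ℝ), f' x ∈ Set.Ioi (0 : ℝ) ∧ f (f' x) = x)
    (hg' : ∀ x ∈ Set.Ioi (0 : ℝ), g' x ∈ Set.Ioi (0 : ℝ) ∧ g (g' x) = x) :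
    Filter.Tendsto (fun x => f' x / g' x) Filter.atTop (nhds 1) := by
  have hu := tendsto_atTop_of_rightInverse hg_mono.monotoneOn hg'
  have hgg' : ∀ᶠ y in atTop, g (g' y) = y :=
    (eventually_gt_atTop 0).mono fun y hy => (hg' y hy).2
  refine tendsto_order.2 ⟨fun a ha => ?_, fun b hb => ?_⟩
  · filter_upwards [eventually_gt_atTop 0] with y hy
    obtain ⟨hu0, hgu⟩ := hg' y hy
    obtain ⟨hv0, hfv⟩ := hf' y hy
    have hle' : g' y ≤ f' y := (hf_mono.le_iff_le hu0 hv0).1 <| by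
      rw [hfv]; calc f (g' y) ≤ g (g' y) := hle _ hu0
        _ = y := hgu
    exact ha.trans_le ((one_le_div hu0).2 hle')
  · have hε : 0 < b - 1 := sub_pos.2 hb
    filter_upwards [eventually_gt_atTop 0, eventually_lt_apply_one_add_mul hconv
      hf_mono.monotoneOn hsim hu hgg' hε] with y hy hlt
    obtain ⟨hu0, -⟩ := hg' y hy
    obtain ⟨hv0, hfv⟩ := hf' y hy
    have hlt' : f' y < (1 + (b - 1)) * g' y :=
      (hf_mono.lt_iff_lt hv0 (mem_Ioi.2 (mul_pos (by linarith) hu0))).1 (by rwa [hfv])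
    rw [div_lt_iff₀ hu0]
    linarith

theorem stmt9 (f g f' g' : ℝ → ℝ)
    (hf_mono : StrictMonoOn f (Set.Ioi 0))
    (hg_mono : StrictMonoOn g (Set.Ioi 0))
    (hf_bij : Set.BijOn f (Set.Ioi 0) (Set.Ioi 0))
    (hg_bij : Set.BijOn g (Set.Ioi 0) (Set.Ioi 0))
    (hconv : ConvexOn ℝ (Set.Ioi 0) f)
    (hle : ∀ x ∈ Set.Ioi (0 : ℝ), f x ≤ g x)
    (hsim : Filter.Tendsto (fun x => f x / g x) Filter.atTop (nhds 1))
    (hf' : ∀ x ∈ Set.Ioi (0 : ℝ), f' x ∈ Set.Ioi (0 : ℝ) ∧ f (f' x) = x)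
    (hg' : ∀ x ∈ Set.Ioi (0 : ℝ), g' x ∈ Set.Ioi (0 : ℝ) ∧ g (g' x) = x) :
    Filter.Tendsto (fun x => f' x / g' x) Filter.atTop (nhds 1) :=
  stmt9_general f g f' g' hf_mono hg_mono hconv hle hsim hf' hg'
end

section
/- Let f : ℕ → ℝ_{>0} with i·f(i)/f(i+1) → α for some real α > 0. Then ((f(i+1) − f(i))/f(i+1))^i → e^(−α) as i → ∞. -/
open Filter Topology

theorem stmt13_general (f : ℕ → ℝ) (α : ℝ) (hpos : ∀ i, 0 < f i)
    (hlim : Filter.Tendsto (fun i : ℕ => (i : ℝ) * f i / f (i + 1))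
      Filter.atTop (nhds α)) :
    Filter.Tendsto (fun i : ℕ => ((f (i + 1) - f i) / f (i + 1)) ^ i)
      Filter.atTop (nhds (Real.exp (-α))) := by
  have hmul : Tendsto (fun i : ℕ => (i : ℝ) * -(f i / f (i + 1))) atTop (𝓝 (-α)) := by
    simpa only [mul_neg, mul_div_assoc] using hlim.neg
  refine (Real.tendsto_one_add_pow_exp_of_tendsto hmul).congr fun i => ?_
  rw [sub_div, div_self (hpos (i + 1)).ne', sub_eq_add_neg]

theorem stmt13 (f : ℕ → ℝ) (α : ℝ) (hα : 0 < α) (hpos : ∀ i, 0 < f i)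
    (hlim : Filter.Tendsto (fun i : ℕ => (i : ℝ) * f i / f (i + 1))
      Filter.atTop (nhds α)) :
    Filter.Tendsto (fun i : ℕ => ((f (i + 1) - f i) / f (i + 1)) ^ i)
      Filter.atTop (nhds (Real.exp (-α))) :=
  stmt13_general f α hpos hlim
end

section
/- For every real z ≥ e, the principal branch of the Lambert W function satisfies log z − log(log z) + (log(log z))/(2 log z) ≤ W₀(z) ≤ log z − log(log z) + (e/(e−1))·(log(log z))/(log z). -/
private lemma exp_neg_le_quad {x : ℝ} (hx : 0 ≤ x) :
    Real.exp (-x) ≤ 1 - x + x ^ 2 / 2 := by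
  have h1 : 1 + x + x ^ 2 / 2 ≤ Real.exp x := Real.quadratic_le_exp_of_nonneg hx
  have hpos : (0:ℝ) < 1 + x + x ^ 2 / 2 := by nlinarith
  have h2 : Real.exp (-x) * (1 + x + x ^ 2 / 2) ≤ 1 := by
    calc Real.exp (-x) * (1 + x + x ^ 2 / 2) ≤ Real.exp (-x) * Real.exp x := by
          exact mul_le_mul_of_nonneg_left h1 (Real.exp_pos _).le
      _ = 1 := by rw [← Real.exp_add]; simp
  have hq : (1:ℝ) ≤ (1 - x + x ^ 2 / 2) * (1 + x + x ^ 2 / 2) := by nlinarith [sq_nonneg x, sq_nonneg (x^2)]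
  nlinarith [Real.exp_pos (-x)]

private lemma mul_exp_strict {a b : ℝ} (ha : 0 ≤ a) (hab : a < b) :
    a * Real.exp a < b * Real.exp b := by
  have h1 : a * Real.exp a ≤ a * Real.exp b :=
    mul_le_mul_of_nonneg_left (Real.exp_le_exp.mpr hab.le) ha
  have h2 : a * Real.exp b < b * Real.exp b :=
    mul_lt_mul_of_pos_right hab (Real.exp_pos b)
  linarith

theorem stmt14 (W : ℝ → ℝ)
    (hW : ∀ z : ℝ, -Real.exp (-1) ≤ z → -1 ≤ W z ∧ W z * Real.exp (W z) = z) :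
    ∀ z : ℝ, Real.exp 1 ≤ z →
      Real.log z - Real.log (Real.log z) +
          Real.log (Real.log z) / (2 * Real.log z) ≤ W z ∧
      W z ≤ Real.log z - Real.log (Real.log z) +
          (Real.exp 1 / (Real.exp 1 - 1)) * (Real.log (Real.log z) / Real.log z) := by
  intro z hz
  have he1 : (1:ℝ) < Real.exp 1 := by
    have := Real.exp_one_gt_d9; linarith
  have he2 : (2:ℝ) < Real.exp 1 := by
    have := Real.exp_one_gt_d9; linarith
  have hz0 : (0:ℝ) < z := lt_of_lt_of_le (by linarith) hz
  set L := Real.log z with hLdef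
  have hL1 : (1:ℝ) ≤ L := by
    have := Real.log_le_log (Real.exp_pos 1) hz
    simpa using this
  have hL0 : (0:ℝ) < L := by linarith
  set M := Real.log L with hMdef
  have hM0 : (0:ℝ) ≤ M := Real.log_nonneg hL1
  have hexpL : Real.exp L = z := Real.exp_log hz0
  have hexpM : Real.exp M = L := Real.exp_log hL0
  -- M ≤ L - 1 and e * M ≤ L
  have hML : M ≤ L - 1 := by
    have := Real.log_le_sub_one_of_pos hL0
    linarith
  have hMe : Real.exp 1 * M ≤ L := by
    have hpos : (0:ℝ) < L / Real.exp 1 := by positivity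
    have h1 : Real.log (L / Real.exp 1) ≤ L / Real.exp 1 - 1 :=
      Real.log_le_sub_one_of_pos hpos
    have h2 : Real.log (L / Real.exp 1) = M - 1 := by
      rw [Real.log_div (by linarith) (Real.exp_ne_zero 1), Real.log_exp]
    rw [h2] at h1
    have : M ≤ L / Real.exp 1 := by linarith
    calc Real.exp 1 * M ≤ Real.exp 1 * (L / Real.exp 1) := by
          exact mul_le_mul_of_nonneg_left this (by positivity)
      _ = L := by field_simp
  clear_value M
  clear_value L
  -- facts about w := W z
  obtain ⟨hw1, hw2⟩ := hW z (by
    have : (0:ℝ) < Real.exp (-1) := Real.exp_pos _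
    linarith)
  set w := W z with hwdef
  clear_value w
  have hw0 : 0 < w := by
    by_contra h
    push_neg at h
    have : w * Real.exp w ≤ 0 := mul_nonpos_of_nonpos_of_nonneg h (Real.exp_pos w).le
    linarith
  constructor
  · -- lower bound
    set t := M / (2 * L) with htdef
    have ht0 : 0 ≤ t := by positivity
    have hMt : M = 2 * L * t := by
      rw [htdef]; field_simp
    clear_value t
    set a := L - M + t with hadef
    have ha0 : 0 < a := by nlinarith
    -- a ≤ exp (L - a)
    have key : a ≤ Real.exp (L - a) := by
      have hLa : L - a = M - t := by ring
      rw [hLa, Real.exp_sub, hexpM]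
      have h1 : 1 - t ≤ Real.exp (-t) := by
        have := Real.add_one_le_exp (-t); linarith
      have h2 : L * (1 - t) ≤ L * Real.exp (-t) :=
        mul_le_mul_of_nonneg_left h1 hL0.le
      rw [div_eq_mul_inv, ← Real.exp_neg]
      nlinarith [mul_nonneg (by linarith : (0:ℝ) ≤ L - 1) ht0, h2, hMt]
    have haz : a * Real.exp a ≤ z := by
      have := mul_le_mul_of_nonneg_right key (Real.exp_pos a).le
      rw [← Real.exp_add] at this
      have h3 : L - a + a = L := by ring
      rw [h3, hexpL] at this
      exact this
    -- conclude a ≤ w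
    by_contra h
    push_neg at h
    have := mul_exp_strict hw0.le h
    rw [hw2] at this
    linarith
  · -- upper bound
    set c := Real.exp 1 / (Real.exp 1 - 1) with hcdef
    have hc1 : 1 < c := by
      rw [hcdef, lt_div_iff₀ (by linarith)]
      linarith
    have hce : c * (Real.exp 1 - 1) = Real.exp 1 := by
      rw [hcdef, div_mul_cancel₀ _ (by linarith : Real.exp 1 - 1 ≠ 0)]
    have hc0 : (0:ℝ) < c := by linarith
    clear_value c
    set u := c * (M / L) with hudef
    have hu0 : 0 ≤ u := mul_nonneg hc0.le (by positivity)
    have huL : u * L = c * M := by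
      rw [hudef]; field_simp
    have hu_le : u * Real.exp 1 ≤ c := by
      have h6 : c * (M / L) * Real.exp 1 = c * (Real.exp 1 * M) / L := by ring
      rw [hudef, h6, div_le_iff₀ hL0]
      exact mul_le_mul_of_nonneg_left hMe hc0.le
    clear_value u
    set b := L - M + u with hbdef
    have hb0 : 0 < b := by nlinarith
    have key : Real.exp (L - b) ≤ b := by
      have hLb : L - b = M - u := by ring
      rw [hLb, Real.exp_sub, hexpM]
      have h1 : Real.exp (-u) ≤ 1 - u + u ^ 2 / 2 := exp_neg_le_quad hu0
      have h2 : L * Real.exp (-u) ≤ L * (1 - u + u ^ 2 / 2) :=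
        mul_le_mul_of_nonneg_left h1 hL0.le
      have hsq : c * c ≤ 2 * Real.exp 1 * (c - 1) := by
        nlinarith [hce, he2, sq_nonneg (Real.exp 1 - 2),
          mul_pos (show (0:ℝ) < Real.exp 1 - 1 by linarith) (show (0:ℝ) < Real.exp 1 - 2 by linarith)]
      have h7 : c * c * M ≤ 2 * Real.exp 1 * (c - 1) * M := mul_le_mul_of_nonneg_right hsq hM0
      have h6' : u * (c * M) * Real.exp 1 ≤ c * (c * M) := by
        have := mul_le_mul_of_nonneg_right hu_le (mul_nonneg hc0.le hM0)
        linarith [this]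
      have h8 : u * (c * M) * Real.exp 1 ≤ 2 * Real.exp 1 * ((c - 1) * M) := by
        linarith
      have h5 : u * (c * M) / 2 ≤ (c - 1) * M := by
        have h10 : (u * (c * M) - 2 * ((c - 1) * M)) * Real.exp 1 ≤ 0 := by linarith
        have h11 : u * (c * M) - 2 * ((c - 1) * M) ≤ 0 := by
          by_contra hcon
          push_neg at hcon
          exact absurd h10 (not_le.mpr (mul_pos hcon (Real.exp_pos 1)))
        linarith
      have h9 : L * u ^ 2 = u * (c * M) := by rw [← huL]; ring
      have hgoal : L * (1 - u + u ^ 2 / 2) ≤ L - M + u := by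
        have hexp : L * (1 - u + u ^ 2 / 2) = L - u * L + L * u ^ 2 / 2 := by ring
        rw [hexp, huL, h9]
        linarith
      rw [div_eq_mul_inv, ← Real.exp_neg]
      linarith
    have hbz : z ≤ b * Real.exp b := by
      have := mul_le_mul_of_nonneg_right key (Real.exp_pos b).le
      rw [← Real.exp_add] at this
      have h3 : L - b + b = L := by ring
      rw [h3, hexpL] at this
      linarith
    -- conclude w ≤ b
    by_contra h
    push_neg at h
    have := mul_exp_strict hb0.le h
    rw [hw2] at this
    linarith
end

section
/- As z → ∞, exp(W₀(z)) ∼ z / log z, i.e. the ratio exp(W₀(z))·(log z)/z tends to 1. -/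
theorem stmt15 (W : ℝ → ℝ)
    (hW : ∀ z : ℝ, -Real.exp (-1) ≤ z → -1 ≤ W z ∧ W z * Real.exp (W z) = z) :
    Filter.Tendsto (fun z : ℝ => Real.exp (W z) * Real.log z / z)
      Filter.atTop (nhds 1) := by
  have hWtop : Filter.Tendsto W Filter.atTop Filter.atTop := by
    rw [Filter.tendsto_atTop]
    intro b
    set c := max b 0 with hc
    filter_upwards [Filter.eventually_gt_atTop (c * Real.exp c)] with z hz
    have hz0 : (0:ℝ) < z := lt_of_le_of_lt (mul_nonneg (le_max_right b 0) (Real.exp_pos c).le) hz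
    have hz1 : -Real.exp (-1) ≤ z := le_trans (neg_nonpos_of_nonneg (Real.exp_pos _).le) hz0.le
    obtain ⟨_, hWz⟩ := hW z hz1
    by_contra h
    push_neg at h
    have hWc : W z < c := lt_of_lt_of_le h (le_max_left b 0)
    rcases le_or_gt (W z) 0 with h0 | h0
    · have : z ≤ 0 := hWz ▸ mul_nonpos_of_nonpos_of_nonneg h0 (Real.exp_pos _).le
      linarith
    · have : W z * Real.exp (W z) < c * Real.exp c :=
        mul_lt_mul hWc (Real.exp_le_exp.2 hWc.le) (Real.exp_pos _) (le_max_right b 0)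
      rw [hWz] at this; linarith
  have hlog : Filter.Tendsto (fun w : ℝ => Real.log w / w) Filter.atTop (nhds 0) := by
    simpa using Real.isLittleO_log_id_atTop.tendsto_div_nhds_zero
  have hmain : Filter.Tendsto (fun z : ℝ => 1 + Real.log (W z) / W z)
      Filter.atTop (nhds 1) := by
    have := (hlog.comp hWtop).const_add 1
    simpa using this
  refine hmain.congr' ?_
  filter_upwards [hWtop.eventually_ge_atTop 1, Filter.eventually_gt_atTop 0] with z hW1 hz0
  have hz1 : -Real.exp (-1) ≤ z := le_trans (neg_nonpos_of_nonneg (Real.exp_pos _).le) hz0.le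
  obtain ⟨_, hWz⟩ := hW z hz1
  have hWpos : 0 < W z := lt_of_lt_of_le one_pos hW1
  set w := W z with hw
  rw [← hWz, Real.log_mul hWpos.ne' (Real.exp_pos _).ne', Real.log_exp]
  field_simp
  ring
end
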